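/- arXiv:1308.2364 — 4 statements merged into one kernel-verified Lean document; each statement's English description precedes it below -/
import Mathlib

section
/- Suppose A and B are finite nonempty subsets of a group with 1 ∈ A ∩ B. If the equation 1 = ab with a ∈ A and b ∈ B has no solution except a = b = 1, then |AB| ≥ |A| + |B| − 1, where AB = { ab : a ∈ A, b ∈ B }. -/
open scoped Pointwise

open Finset MulOpposite

/-!
Scherk's theorem, by the e-transforms of DeVos' proof of Cauchy–Davenport. For `e ≠ 1` in
`A ∩ B`, both `(A ∪ Ae, B ∩ e⁻¹B)` and `(A ∩ Ae⁻¹, B ∪ eB)` again satisfy the hypotheses and have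
product set inside `AB`, while their cardinality sums average to `|A| + |B|`. So one of them does
not decrease `|A| + |B|`, and preferring the first one (which strictly shrinks `B`) the process
terminates, by the lexicographic measure `(2|AB| - |A| - |B|, |B|)`, at a pair with
`A ∩ B = {1}`, where `A ∪ B ⊆ AB` already gives the bound.
-/

namespace Finset

lemma card_inter_smul_finset_lt {α β : Type*} [Group α] [MulAction α β] [DecidableEq β] {a : α}
    {t : Finset β} (h : a • t ≠ t) : #(t ∩ a • t) < #t :=
  card_lt_card ⟨inter_subset_left, fun hsub ↦ h (eq_of_subset_of_card_le
    (hsub.trans inter_subset_right) (card_smul_finset a t).le).symm⟩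

variable {G : Type*} [Group G] [DecidableEq G]

lemma card_mulETransformRight_add_card_mulETransformLeft_inv (e : G) (x : Finset G × Finset G) :
    #(mulETransformRight e x).1 + #(mulETransformRight e x).2 +
        (#(mulETransformLeft e⁻¹ x).1 + #(mulETransformLeft e⁻¹ x).2) =
      #x.1 + #x.2 + (#x.1 + #x.2) := by
  have hfst : #(x.1 ∩ op e⁻¹ • x.1) = #(x.1 ∩ op e • x.1) := by
    rw [← card_smul_finset (op e), smul_finset_inter, op_inv, smul_inv_smul, inter_comm]
  have hsnd : #(x.2 ∩ e⁻¹ • x.2) = #(x.2 ∩ e • x.2) := by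
    rw [← card_smul_finset e, smul_finset_inter, smul_inv_smul, inter_comm]
  simp only [mulETransformRight, mulETransformLeft, inv_inv, hfst, hsnd]
  have := card_union_add_card_inter x.1 (op e • x.1)
  have := card_union_add_card_inter x.2 (e • x.2)
  rw [card_smul_finset] at *
  omega

structure IsScherkPair (x : Finset G × Finset G) : Prop where
  one_mem_fst : (1 : G) ∈ x.1
  one_mem_snd : (1 : G) ∈ x.2
  eq_one_of_mul_eq_one : ∀ a ∈ x.1, ∀ b ∈ x.2, a * b = 1 → a = 1 ∧ b = 1

namespace IsScherkPair

variable {x : Finset G × Finset G} {e : G}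

lemma mulETransformRight (h : IsScherkPair x) (he₁ : e ∈ x.1) (he₂ : e ∈ x.2) :
    IsScherkPair (mulETransformRight e x) where
  one_mem_fst := mem_union_left _ h.one_mem_fst
  one_mem_snd := mem_inter.2 ⟨h.one_mem_snd, mem_inv_smul_finset_iff.2 (by simpa using he₂)⟩
  eq_one_of_mul_eq_one a ha b hb hab := by
    obtain ⟨hb, heb⟩ := mem_inter.1 hb
    rw [mem_inv_smul_finset_iff, smul_eq_mul] at heb
    obtain ha | ha := mem_union.1 ha
    · exact h.eq_one_of_mul_eq_one a ha b hb hab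
    obtain ⟨c, hc, rfl⟩ := mem_smul_finset.1 ha
    rw [op_smul_eq_mul, mul_assoc] at hab
    obtain ⟨rfl, hb'⟩ := h.eq_one_of_mul_eq_one c hc _ heb hab
    obtain rfl : b = e⁻¹ := eq_inv_of_mul_eq_one_right hb'
    obtain ⟨rfl, -⟩ := h.eq_one_of_mul_eq_one e he₁ e⁻¹ hb (mul_inv_cancel e)
    simp

lemma mulETransformLeft_inv (h : IsScherkPair x) (he₁ : e ∈ x.1) (he₂ : e ∈ x.2) :
    IsScherkPair (mulETransformLeft e⁻¹ x) where
  one_mem_fst := mem_inter.2 ⟨h.one_mem_fst, mem_smul_finset.2 ⟨e, he₁, by simp⟩⟩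
  one_mem_snd := mem_union_left _ h.one_mem_snd
  eq_one_of_mul_eq_one a ha b hb hab := by
    obtain ⟨ha, hae⟩ := mem_inter.1 ha
    obtain ⟨c, hc, rfl⟩ := mem_smul_finset.1 hae
    obtain hb | hb := mem_union.1 hb
    · exact h.eq_one_of_mul_eq_one _ ha b hb hab
    obtain ⟨d, hd, rfl⟩ := mem_smul_finset.1 hb
    rw [op_smul_eq_mul, smul_eq_mul, inv_inv, mul_assoc, inv_mul_cancel_left] at hab
    obtain ⟨rfl, rfl⟩ := h.eq_one_of_mul_eq_one c hc d hd hab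
    obtain rfl : e = 1 := (h.eq_one_of_mul_eq_one _ ha e he₂ (by simp)).2
    simp

lemma card_mulETransformRight_snd_lt (h : IsScherkPair x) (he₁ : e ∈ x.1) (he : e ≠ 1) :
    #(Finset.mulETransformRight e x).2 < #x.2 := by
  refine card_inter_smul_finset_lt fun hinv ↦ he ?_
  have : e⁻¹ ∈ x.2 := by
    rw [← hinv]; simpa using smul_mem_smul_finset (a := e⁻¹) h.one_mem_snd
  exact (h.eq_one_of_mul_eq_one e he₁ e⁻¹ this (mul_inv_cancel e)).1

lemma card_add_card_le_two_mul_card_mul (h : IsScherkPair x) :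
    #x.1 + #x.2 ≤ 2 * #(x.1 * x.2) := by
  have := card_le_card (subset_mul_left x.1 h.one_mem_snd)
  have := card_le_card (subset_mul_right x.2 h.one_mem_fst)
  omega

lemma card_add_card_le_card_mul_add_one_of_inter_subset (h : IsScherkPair x)
    (hx : x.1 ∩ x.2 ⊆ {1}) : #x.1 + #x.2 ≤ #(x.1 * x.2) + 1 := by
  have hunion : x.1 ∪ x.2 ⊆ x.1 * x.2 :=
    union_subset (subset_mul_left _ h.one_mem_snd) (subset_mul_right _ h.one_mem_fst)
  have := card_union_add_card_inter x.1 x.2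
  have := card_le_card hunion
  have := card_le_card hx
  rw [card_singleton] at this
  omega

theorem card_add_card_le_card_mul_add_one {x : Finset G × Finset G} (h : IsScherkPair x) :
    #x.1 + #x.2 ≤ #(x.1 * x.2) + 1 := by
  by_cases hx : x.1 ∩ x.2 ⊆ {1}
  · exact h.card_add_card_le_card_mul_add_one_of_inter_subset hx
  obtain ⟨e, he, he1⟩ : ∃ e ∈ x.1 ∩ x.2, e ≠ 1 := by simpa using not_subset.1 hx
  obtain ⟨he₁, he₂⟩ := mem_inter.1 he
  have hR := card_le_card (mulETransformRight.fst_mul_snd_subset e x)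
  have hL := card_le_card (mulETransformLeft.fst_mul_snd_subset e⁻¹ x)
  rcases le_or_lt_of_add_le_add
    (card_mulETransformRight_add_card_mulETransformLeft_inv e x).ge with hsum | hsum
  · have h' := h.mulETransformRight he₁ he₂
    have := h'.card_add_card_le_card_mul_add_one
    omega
  · have h' := h.mulETransformLeft_inv he₁ he₂
    have := h'.card_add_card_le_card_mul_add_one
    omega
termination_by (2 * #(x.1 * x.2) - (#x.1 + #x.2), #x.2)
decreasing_by
  all_goals
    have := h.card_add_card_le_two_mul_card_mul
    have := h'.card_add_card_le_two_mul_card_mul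
    rw [Prod.lex_def]
  · have := h.card_mulETransformRight_snd_lt he₁ he1
    omega
  · omega

end IsScherkPair

end Finset

theorem card_mul_ge_general {G : Type*} [Group G] [DecidableEq G] (A B : Finset G)
    (h1A : (1 : G) ∈ A) (h1B : (1 : G) ∈ B)
    (h : ∀ a ∈ A, ∀ b ∈ B, a * b = 1 → a = 1 ∧ b = 1) :
    A.card + B.card - 1 ≤ (A * B).card := by
  have : #A + #B ≤ #(A * B) + 1 :=
    (IsScherkPair.mk (x := (A, B)) h1A h1B h).card_add_card_le_card_mul_add_one
  omega

/-- Suppose `A` and `B` are finite nonempty subsets of a group with `1 ∈ A ∩ B`.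
If `1 = a * b` with `a ∈ A`, `b ∈ B` has no solution except `a = b = 1`, then
`|A * B| ≥ |A| + |B| - 1`. -/
theorem card_mul_ge {G : Type*} [Group G] [DecidableEq G] (A B : Finset G)
    (hA : A.Nonempty) (hB : B.Nonempty) (h1A : (1 : G) ∈ A) (h1B : (1 : G) ∈ B)
    (h : ∀ a ∈ A, ∀ b ∈ B, a * b = 1 → a = 1 ∧ b = 1) :
    A.card + B.card - 1 ≤ (A * B).card :=
  card_mul_ge_general A B h1A h1B h
end

section
/- Let G be a finite group and let S be a one-product free sequence over G. If S = S₁·S₂·…·S_t is a factorization of S into (nonempty) subsequences S₁,…,S_t, then |Π(S)| ≥ Σ_{i=1}^{t} |Π(S_i)|. -/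
/-!
Write `Π₀(X) = Π(X) ∪ {1}`. For a factorization `T · U` of a one-product free sequence,
`Π₀(T) * Π₀(U) ⊆ Π₀(T · U)`, and `1 = 1 * 1` is the only way to write `1` as such a product. So
Kemperman's theorem `|A * B| ≥ |A| + |B| - 1` (valid in any group once some element of `A * B` has
a unique representation) gives `|Π(T · U)| ≥ |Π(T)| + |Π(U)|`; induction on the number of factors
finishes the proof.
-/

/-- The set `Π(S)` of all products of nonempty subsequences of the sequence
(multiset) `S` over `G`, where the terms of a subsequence may be taken in any order. -/
def subseqProds {G : Type*} [Group G] (S : Multiset G) : Set G :=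
  {x | ∃ l : List G, l ≠ [] ∧ (l : Multiset G) ≤ S ∧ l.prod = x}

/-- A sequence `S` over `G` is one-product free if `1 ∉ Π(S)`. -/
def OneProdFree {G : Type*} [Group G] (S : Multiset G) : Prop :=
  (1 : G) ∉ subseqProds S

open Finset MulOpposite
open scoped Pointwise

section Kemperman

variable {G : Type*} [Group G] [DecidableEq G]

lemma card_mulETransformLeft_inv_add_card_mulETransformRight (c : G) (x : Finset G × Finset G) :
    #(mulETransformLeft c⁻¹ x).1 + #(mulETransformLeft c⁻¹ x).2 +
        (#(mulETransformRight c x).1 + #(mulETransformRight c x).2) =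
      #x.1 + #x.2 + (#x.1 + #x.2) := by
  have hfst : #(x.1 ∩ op c⁻¹ • x.1) = #(x.1 ∩ op c • x.1) := by
    rw [← card_smul_finset (op c), smul_finset_inter, op_inv, smul_inv_smul, inter_comm]
  have hsnd : #(x.2 ∪ c • x.2) = #(x.2 ∪ c⁻¹ • x.2) := by
    rw [← card_smul_finset c⁻¹, smul_finset_union, inv_smul_smul, union_comm]
  have := MulETransform.card c x
  simp only [mulETransformLeft_fst, mulETransformLeft_snd, mulETransformRight_fst,
    mulETransformRight_snd, inv_inv] at this ⊢
  rwa [hfst, hsnd]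

lemma uniqueMul_mulETransformLeft_inv {s t : Finset G} {c : G} (h : UniqueMul s t 1 1)
    (hc : c ∈ t) :
    UniqueMul (mulETransformLeft c⁻¹ (s, t)).1 (mulETransformLeft c⁻¹ (s, t)).2 1 1 := by
  intro x y hx hy hxy
  simp only [mulETransformLeft_fst, mulETransformLeft_snd, inv_inv, mem_inter, mem_union,
    mem_smul_finset, smul_eq_mul, op_smul_eq_mul] at hx hy
  obtain ⟨hxs, v, hv, rfl⟩ := hx
  obtain hyt | ⟨w, hw, rfl⟩ := hy
  · exact h hxs hyt hxy
  · obtain ⟨rfl, rfl⟩ := h hv hw (by rw [← hxy]; group)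
    obtain ⟨hc1, -⟩ := h hxs hc (by group)
    simp_all

lemma uniqueMul_mulETransformRight {s t : Finset G} {c : G} (h : UniqueMul s t 1 1)
    (hc : c ∈ s) :
    UniqueMul (mulETransformRight c (s, t)).1 (mulETransformRight c (s, t)).2 1 1 := by
  intro x y hx hy hxy
  simp only [mulETransformRight_fst, mulETransformRight_snd, mem_inter, mem_union,
    mem_smul_finset, smul_eq_mul, op_smul_eq_mul] at hx hy
  obtain ⟨hyt, w, hw, rfl⟩ := hy
  obtain hxs | ⟨v, hv, rfl⟩ := hx
  · exact h hxs hyt hxy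
  · obtain ⟨rfl, rfl⟩ := h hv hw (by rw [← hxy]; group)
    obtain ⟨hc1, -⟩ := h hc hyt (by group)
    simp_all

lemma card_mulETransformLeft_inv_fst_lt {s t : Finset G} {c : G} (h : UniqueMul s t 1 1)
    (h1s : 1 ∈ s) (hc : c ∈ t) (hc1 : c ≠ 1) : #(mulETransformLeft c⁻¹ (s, t)).1 < #s := by
  refine card_lt_card ⟨inter_subset_left, fun hsub => hc1 ?_⟩
  have hs : op c⁻¹ • s = s :=
    (eq_of_subset_of_card_le (hsub.trans inter_subset_right) (card_smul_finset _ _).le).symm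
  have hcs : c⁻¹ ∈ s := by
    have := smul_mem_smul_finset (a := op c⁻¹) h1s
    rwa [hs, op_smul_eq_mul, one_mul] at this
  simpa using (h hcs hc (by simp)).1

lemma card_add_card_le_card_mul_add_one_of_inter_subset {s t : Finset G} (h1s : 1 ∈ s)
    (h1t : 1 ∈ t) (hst : s ∩ t ⊆ {1}) : #s + #t ≤ #(s * t) + 1 := by
  have hunion : #(s ∪ t) ≤ #(s * t) :=
    card_le_card (union_subset (subset_mul_left s h1t) (subset_mul_right t h1s))
  have hinter : #(s ∩ t) ≤ 1 := card_le_card hst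
  have := card_union_add_card_inter s t
  omega

/-- Kemperman's theorem for a unique representation `1 = 1 * 1`, by DeVos's e-transform
induction: of the two transforms below, which shrink `s * t`, one does not decrease `#s + #t`
while shrinking `s`, and the other strictly increases `#s + #t`. -/
theorem card_add_card_le_card_mul_add_one {s t : Finset G} (h1s : 1 ∈ s) (h1t : 1 ∈ t)
    (h : UniqueMul s t 1 1) : #s + #t ≤ #(s * t) + 1 := by
  by_cases hst : s ∩ t ⊆ {1}
  · exact card_add_card_le_card_mul_add_one_of_inter_subset h1s h1t hst
  obtain ⟨c, hc, hc1⟩ := not_subset.1 hst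
  rw [mem_inter] at hc
  rw [mem_singleton] at hc1
  set L := mulETransformLeft c⁻¹ (s, t)
  set R := mulETransformRight c (s, t)
  have hLR : #L.1 + #L.2 + (#R.1 + #R.2) = #s + #t + (#s + #t) :=
    card_mulETransformLeft_inv_add_card_mulETransformRight c (s, t)
  have hL : #(L.1 * L.2) ≤ #(s * t) :=
    card_le_card (mulETransformLeft.fst_mul_snd_subset c⁻¹ (s, t))
  have hR : #(R.1 * R.2) ≤ #(s * t) :=
    card_le_card (mulETransformRight.fst_mul_snd_subset c (s, t))
  have h1L : (1 : G) ∈ L.1 ∧ 1 ∈ L.2 := by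
    simpa [L, mem_smul_finset, h1s, h1t] using ⟨c, hc.1, mul_inv_cancel c⟩
  have h1R : (1 : G) ∈ R.1 ∧ 1 ∈ R.2 := by
    simpa [R, mem_smul_finset, h1s, h1t] using ⟨c, hc.2, inv_mul_cancel c⟩
  have hL1 : #L.1 < #s := card_mulETransformLeft_inv_fst_lt h h1s hc.2 hc1
  rcases le_or_lt_of_add_le_add hLR.ge with hle | hlt
  · have := card_add_card_le_card_mul_add_one h1L.1 h1L.2 (uniqueMul_mulETransformLeft_inv h hc.2)
    omega
  · have := card_le_card_mul_right (s := R.1) ⟨1, h1R.2⟩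
    have := card_le_card_mul_left (t := R.2) ⟨1, h1R.1⟩
    have := card_add_card_le_card_mul_add_one h1R.1 h1R.2 (uniqueMul_mulETransformRight h hc.1)
    omega
termination_by (2 * #(s * t) - (#s + #t), #s)
decreasing_by
  all_goals simp only [L, R, Prod.lex_iff] at *; omega

end Kemperman

section SubseqProds

variable {G : Type*} [Group G]

lemma subseqProds_mono {T S : Multiset G} (h : T ≤ S) : subseqProds T ⊆ subseqProds S := by
  rintro x ⟨l, hl, hlT, rfl⟩
  exact ⟨l, hl, hlT.trans h, rfl⟩

lemma OneProdFree.mono {T S : Multiset G} (hS : OneProdFree S) (h : T ≤ S) : OneProdFree T :=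
  fun h1 => hS (subseqProds_mono h h1)

lemma mul_mem_subseqProds_add {T U : Multiset G} {x y : G} (hx : x ∈ subseqProds T)
    (hy : y ∈ subseqProds U) : x * y ∈ subseqProds (T + U) := by
  obtain ⟨l, hl, hlT, rfl⟩ := hx
  obtain ⟨m, -, hmU, rfl⟩ := hy
  exact ⟨l ++ m, by simp [hl], by simpa using add_le_add hlT hmU, List.prod_append⟩

lemma subseqProds_finite (S : Multiset G) : (subseqProds S).Finite := by
  refine ((S.powerset.bind Multiset.lists).finite_toSet.image List.prod).subset ?_
  rintro x ⟨l, -, hlS, rfl⟩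
  exact ⟨l, Multiset.mem_bind.2 ⟨l, Multiset.mem_powerset.2 hlS, by simp⟩, rfl⟩

theorem ncard_subseqProds_add_ncard_subseqProds_le (T U : Multiset G)
    (h : OneProdFree (T + U)) :
    (subseqProds T).ncard + (subseqProds U).ncard ≤ (subseqProds (T + U)).ncard := by
  classical
  obtain ⟨A, hA⟩ := (subseqProds_finite T).exists_finset_coe
  obtain ⟨B, hB⟩ := (subseqProds_finite U).exists_finset_coe
  obtain ⟨P, hP⟩ := (subseqProds_finite (T + U)).exists_finset_coe
  have hAP : A ⊆ P := by
    simpa [← coe_subset, hA, hP] using subseqProds_mono (Multiset.le_add_right T U)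
  have hBP : B ⊆ P := by
    simpa [← coe_subset, hB, hP] using subseqProds_mono (Multiset.le_add_left U T)
  have hABP : ∀ x ∈ A, ∀ y ∈ B, x * y ∈ P := fun x hx y hy => by
    simpa [← mem_coe, hA, hB, hP] using mul_mem_subseqProds_add (T := T) (U := U)
      (by rwa [← hA, mem_coe]) (by rwa [← hB, mem_coe])
  have h1P : (1 : G) ∉ P := by rwa [← mem_coe, hP]
  have hprod : ∀ x ∈ insert 1 A, ∀ y ∈ insert 1 B, x = 1 ∧ y = 1 ∨ x * y ∈ P := by
    intro x hx y hy
    rcases mem_insert.1 hx with rfl | hx <;> rcases mem_insert.1 hy with rfl | hy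
    · simp
    · simpa using .inr (hBP hy)
    · simpa using .inr (hAP hx)
    · exact .inr (hABP x hx y hy)
  have hunique : UniqueMul (insert 1 A) (insert 1 B) 1 1 := fun x y hx hy hxy =>
    (hprod x hx y hy).resolve_right (by rwa [hxy, mul_one])
  have hsub : insert 1 A * insert 1 B ⊆ insert 1 P := by
    intro z hz
    obtain ⟨x, hx, y, hy, rfl⟩ := mem_mul.1 hz
    rcases hprod x hx y hy with ⟨rfl, rfl⟩ | hxy
    · simp
    · exact mem_insert_of_mem hxy
  have hkem :=
    card_add_card_le_card_mul_add_one (mem_insert_self 1 A) (mem_insert_self 1 B) hunique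
  have hcard := card_le_card hsub
  rw [card_insert_of_notMem fun h => h1P (hAP h), card_insert_of_notMem fun h => h1P (hBP h)]
    at hkem
  rw [card_insert_of_notMem h1P] at hcard
  rw [← hA, ← hB, ← hP, Set.ncard_coe_finset, Set.ncard_coe_finset, Set.ncard_coe_finset]
  omega

theorem sum_ncard_subseqProds_le {ι : Type*} (I : Finset ι) (f : ι → Multiset G)
    (h : OneProdFree (∑ i ∈ I, f i)) :
    ∑ i ∈ I, (subseqProds (f i)).ncard ≤ (subseqProds (∑ i ∈ I, f i)).ncard := by
  classical
  induction I using Finset.induction_on with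
  | empty => simp
  | insert a I ha ih =>
    rw [sum_insert ha] at h
    rw [sum_insert ha, sum_insert ha]
    calc (subseqProds (f a)).ncard + ∑ i ∈ I, (subseqProds (f i)).ncard
        ≤ (subseqProds (f a)).ncard + (subseqProds (∑ i ∈ I, f i)).ncard :=
          Nat.add_le_add_left (ih (h.mono (Multiset.le_add_left _ _))) _
      _ ≤ (subseqProds (f a + ∑ i ∈ I, f i)).ncard :=
          ncard_subseqProds_add_ncard_subseqProds_le _ _ h

end SubseqProds

theorem sum_card_subseqProds_le_general {G : Type*} [Group G]
    (S : Multiset G) (hS : OneProdFree S) (t : ℕ) (f : Fin t → Multiset G)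
    (hsum : S = ∑ i, f i) :
    ∑ i, (subseqProds (f i)).ncard ≤ (subseqProds S).ncard := by
  subst hsum
  exact sum_ncard_subseqProds_le univ f hS

/-- Let `G` be a finite group and let `S` be a one-product free sequence over `G`.
If `S = S₁ · S₂ · … · S_t` is a factorization of `S` into nonempty subsequences,
then `|Π(S)| ≥ ∑ i, |Π(Sᵢ)|`. -/
theorem sum_card_subseqProds_le {G : Type*} [Group G] [Fintype G]
    (S : Multiset G) (hS : OneProdFree S) (t : ℕ) (f : Fin t → Multiset G)
    (hne : ∀ i, f i ≠ 0) (hsum : S = ∑ i, f i) :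
    ∑ i, (subseqProds (f i)).ncard ≤ (subseqProds S).ncard :=
  sum_card_subseqProds_le_general S hS t f hsum
end

section
/- Let N be a subgroup of a finite group G, let p(G) denote the smallest prime divisor of |G|, and for X ⊆ G write X̄ = { xN : x ∈ X } for the image of X in the set of left cosets of N. Let A and B be nonempty subsets of G such that the coset N = 1̄ belongs to both Ā and B̄. If |B̄| ≥ 2, then |image of AB ∪ BA| ≥ min{ p(G), |Ā| + 1 }, where AB = { ab : a ∈ A, b ∈ B } and BA = { ba : a ∈ A, b ∈ B }. -/
open scoped Pointwise

/-! The image `Ā` of `A` lies in the image of `AB`, because `B` meets `N`. If this inclusion into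
the image `Q` of `AB ∪ BA` is strict we are done. Otherwise the image of `BA` lies in `Ā`, i.e.
every `b ∈ B` maps `Ā` into itself under the action of `G` on `G ⧸ N`. The finite set `Ā` is then
stable under `⟨B⟩`, so it contains the `⟨B⟩`-orbit of `1̄`, which is the image of `⟨B⟩`. The size
of that orbit divides `|G|` and is at least `|B̄| ≥ 2`, hence at least `p`. -/

namespace Nat

theorem le_of_dvd_of_forall_prime_dvd_le {n p d : ℕ} (hmin : ∀ q : ℕ, q.Prime → q ∣ n → p ≤ q)
    (hd : 2 ≤ d) (hdn : d ∣ n) : p ≤ d :=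
  (hmin _ (minFac_prime (by omega)) ((minFac_dvd d).trans hdn)).trans (minFac_le (by omega))

end Nat

namespace MulAction

variable {G α : Type*} [Group G] [MulAction G α]

theorem ncard_orbit_dvd_card [Finite G] (x : α) : (orbit G x).ncard ∣ Nat.card G :=
  index_stabilizer G x ▸ (stabilizer G x).index_dvd_card

theorem orbit_closure_subset_of_smul_set_subset {s : Set α} (hs : s.Finite) {x : α} (hx : x ∈ s)
    {B : Set G} (hB : ∀ b ∈ B, b • s ⊆ s) : orbit (Subgroup.closure B) x ⊆ s := by
  have hstab : Subgroup.closure B ≤ stabilizer G s :=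
    (Subgroup.closure_le _).mpr fun b hb =>
      (mem_stabilizer_set_iff_smul_set_subset hs).mpr (hB b hb)
  rintro _ ⟨⟨g, hg⟩, rfl⟩
  have hgs : g • s = s := hstab hg
  exact hgs ▸ Set.smul_mem_smul_set hx

end MulAction

namespace QuotientGroup

variable {G : Type*} [Group G] {N : Subgroup G}

theorem image_mk_subgroup_eq_orbit (H : Subgroup G) :
    (mk '' (H : Set G) : Set (G ⧸ N)) = MulAction.orbit H (mk 1 : G ⧸ N) := by
  ext x
  constructor
  · rintro ⟨h, hh, rfl⟩
    exact ⟨⟨h, hh⟩, congrArg mk (mul_one h)⟩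
  · rintro ⟨⟨h, hh⟩, rfl⟩
    exact ⟨h, hh, congrArg mk (mul_one h).symm⟩

theorem ncard_image_mk_subgroup_dvd_card [Finite G] (H : Subgroup G) :
    (mk '' (H : Set G) : Set (G ⧸ N)).ncard ∣ Nat.card G :=
  image_mk_subgroup_eq_orbit H ▸
    (MulAction.ncard_orbit_dvd_card _).trans (Subgroup.card_subgroup_dvd_card H)

theorem image_mk_subset_image_mk_mul {A B : Set G} (h1B : (mk 1 : G ⧸ N) ∈ mk '' B) :
    (mk '' A : Set (G ⧸ N)) ⊆ mk '' (A * B) := by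
  obtain ⟨b, hb, hb1⟩ := h1B
  rintro _ ⟨a, ha, rfl⟩
  refine ⟨a * b, Set.mul_mem_mul ha hb, ?_⟩
  calc (mk (a * b) : G ⧸ N) = a • mk b := rfl
    _ = mk a := by rw [hb1, MulAction.Quotient.smul_mk, smul_eq_mul, mul_one]

theorem smul_image_mk_subset_image_mk_mul {A B : Set G} {b : G} (hb : b ∈ B) :
    b • (mk '' A : Set (G ⧸ N)) ⊆ mk '' (B * A) := by
  rintro _ ⟨_, ⟨a, ha, rfl⟩, rfl⟩
  exact ⟨b * a, Set.mul_mem_mul hb ha, rfl⟩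

end QuotientGroup

open QuotientGroup in
theorem card_image_mul_union_general {G : Type*} [Group G] [Fintype G] (N : Subgroup G)
    (p : ℕ)
    (hmin : ∀ q : ℕ, q.Prime → q ∣ Fintype.card G → p ≤ q)
    (A B : Set G)
    (h1A : (QuotientGroup.mk 1 : G ⧸ N) ∈ QuotientGroup.mk '' A)
    (h1B : (QuotientGroup.mk 1 : G ⧸ N) ∈ QuotientGroup.mk '' B)
    (hB2 : 2 ≤ (QuotientGroup.mk '' B : Set (G ⧸ N)).ncard) :
    min p ((QuotientGroup.mk '' A : Set (G ⧸ N)).ncard + 1) ≤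
      (QuotientGroup.mk '' (A * B ∪ B * A) : Set (G ⧸ N)).ncard := by
  have hAQ : (mk '' A : Set (G ⧸ N)) ⊆ mk '' (A * B ∪ B * A) :=
    (image_mk_subset_image_mk_mul h1B).trans (Set.image_mono Set.subset_union_left)
  rcases hAQ.eq_or_ssubset with hAeq | hAlt
  · have hBA : ∀ b ∈ B, b • (mk '' A : Set (G ⧸ N)) ⊆ mk '' A := fun b hb =>
      ((smul_image_mk_subset_image_mk_mul hb).trans
        (Set.image_mono Set.subset_union_right)).trans hAeq.symm.subset
    have hclosure : (mk '' (Subgroup.closure B : Set G) : Set (G ⧸ N)) ⊆ mk '' A := by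
      rw [image_mk_subgroup_eq_orbit]
      exact MulAction.orbit_closure_subset_of_smul_set_subset (Set.toFinite _) h1A hBA
    have hp_le : p ≤ (mk '' (Subgroup.closure B : Set G) : Set (G ⧸ N)).ncard :=
      Nat.le_of_dvd_of_forall_prime_dvd_le hmin
        (hB2.trans (Set.ncard_le_ncard (Set.image_mono Subgroup.subset_closure)))
        (Nat.card_eq_fintype_card (α := G) ▸ ncard_image_mk_subgroup_dvd_card _)
    calc min p _ ≤ p := min_le_left _ _
      _ ≤ _ := hp_le.trans (Set.ncard_le_ncard hclosure)
      _ = _ := by rw [hAeq]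
  · exact (min_le_right _ _).trans (Set.ncard_lt_ncard hAlt (Set.toFinite _))

/-- Let `N` be a subgroup of a finite group `G`, let `p` be the smallest prime divisor
of `|G|`, and for `X ⊆ G` let `X̄` denote the image of `X` in the left cosets `G ⧸ N`.
Let `A, B` be nonempty subsets of `G` with `1̄ ∈ Ā ∩ B̄`. If `|B̄| ≥ 2`, then
`|image of A*B ∪ B*A| ≥ min (p, |Ā| + 1)`. -/
theorem card_image_mul_union {G : Type*} [Group G] [Fintype G] (N : Subgroup G)
    (p : ℕ) (hp : p.Prime) (hpn : p ∣ Fintype.card G)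
    (hmin : ∀ q : ℕ, q.Prime → q ∣ Fintype.card G → p ≤ q)
    (A B : Set G) (hA : A.Nonempty) (hB : B.Nonempty)
    (h1A : (QuotientGroup.mk 1 : G ⧸ N) ∈ QuotientGroup.mk '' A)
    (h1B : (QuotientGroup.mk 1 : G ⧸ N) ∈ QuotientGroup.mk '' B)
    (hB2 : 2 ≤ (QuotientGroup.mk '' B : Set (G ⧸ N)).ncard) :
    min p ((QuotientGroup.mk '' A : Set (G ⧸ N)).ncard + 1) ≤
      (QuotientGroup.mk '' (A * B ∪ B * A) : Set (G ⧸ N)).ncard :=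
  card_image_mul_union_general N p hmin A B h1A h1B hB2
end

section
/- Let G be a finite group of order n, let p be the smallest prime divisor of n, and suppose G has a cyclic subgroup H of order n/p. Let h be a generator of H and let g ∈ G \ H. Then the sequence S consisting of p − 1 copies of g and n/p − 1 copies of h is one-product free (and has length n/p + p − 2). -/
/-!
Modulo the normal subgroup `H` (normal since its index `p` is the smallest prime divisor of
`|G|`), `h` vanishes and `g` has order `p`, so a product of `i` copies of `g` and some copies of
`h`, in any order, is `g ^ i` modulo `H`; it can be `1` only if `p ∣ i`, i.e. `i = 0`. What is
left is a power `h ^ j` with `0 < j < ord h = |G| / p`, which is not `1` either.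
-/

theorem MonoidHom.map_list_prod_eq_pow_count {G Q : Type*} [Monoid G] [Monoid Q]
    [DecidableEq G] (φ : G →* Q) {g : G} {l : List G} (hl : ∀ x ∈ l, x ≠ g → φ x = 1) :
    φ l.prod = φ g ^ l.count g := by
  induction l with
  | nil => simp
  | cons x t ih =>
    have ht := ih fun y hy => hl y (List.mem_cons_of_mem x hy)
    by_cases hxg : x = g
    · subst hxg
      rw [List.prod_cons, map_mul, ht, List.count_cons_self, pow_succ']
    · rw [List.prod_cons, map_mul, ht, hl x List.mem_cons_self hxg, one_mul,
        List.count_cons_of_ne hxg]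

theorem oneProdFree_replicate_add_replicate {G Q : Type*} [Group G] [Group Q] (φ : G →* Q)
    {g h : G} (hgh : g ≠ h) {a b : ℕ} (hφh : φ h = 1) (ha : a < orderOf (φ g))
    (hb : b < orderOf h) :
    OneProdFree (Multiset.replicate a g + Multiset.replicate b h) := by
  classical
  rintro ⟨l, hl_ne, hl_le, hl_prod⟩
  have hmem : ∀ x ∈ l, x = g ∨ x = h := fun x hx =>
    (Multiset.mem_add.mp (Multiset.mem_of_le hl_le (Multiset.mem_coe.mpr hx))).imp
      Multiset.eq_of_mem_replicate Multiset.eq_of_mem_replicate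
  have hcount_g : l.count g = 0 := by
    have hle : l.count g ≤ a := by
      simpa [Multiset.count_replicate, hgh.symm] using Multiset.count_le_of_le g hl_le
    have hpow : φ g ^ l.count g = 1 := by
      rw [← φ.map_list_prod_eq_pow_count fun x hx hxg => (hmem x hx).resolve_left hxg ▸ hφh,
        hl_prod, map_one]
    exact Nat.eq_zero_of_dvd_of_lt (orderOf_dvd_of_pow_eq_one hpow) (hle.trans_lt ha)
  have hall : ∀ x ∈ l, x = h := fun x hx =>
    (hmem x hx).resolve_left fun hxg => List.count_eq_zero.mp hcount_g (hxg ▸ hx)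
  have hlen : l.length ≤ b := by
    simpa [Multiset.count_replicate, hgh, List.count_eq_length.mpr fun x hx => (hall x hx).symm]
      using Multiset.count_le_of_le h hl_le
  have hpow : h ^ l.length = 1 := List.prod_eq_pow_card l h hall ▸ hl_prod
  have := Nat.le_of_dvd (List.length_pos_iff.mpr hl_ne) (orderOf_dvd_of_pow_eq_one hpow)
  omega

/-- Let `G` be a finite group of order `n`, let `p` be the smallest prime divisor of
`n`, and suppose `G` has a cyclic subgroup `H` of order `n / p`, generated by `h`.
Let `g ∈ G \ H`. Then the sequence consisting of `p - 1` copies of `g` and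
`n / p - 1` copies of `h` is one-product free. -/
theorem oneProdFree_replicate {G : Type*} [Group G] [Fintype G]
    (p : ℕ) (hp : p.Prime) (hpn : p ∣ Fintype.card G)
    (hmin : ∀ q : ℕ, q.Prime → q ∣ Fintype.card G → p ≤ q)
    (H : Subgroup G) (hH : Nat.card H = Fintype.card G / p)
    (h : G) (hgen : Subgroup.zpowers h = H) (g : G) (hg : g ∉ H) :
    OneProdFree
      (Multiset.replicate (p - 1) g + Multiset.replicate (Fintype.card G / p - 1) h) := by
  have := Fact.mk hp
  have hcard_pos : 0 < Fintype.card G / p := Nat.div_pos (Nat.le_of_dvd Fintype.card_pos hpn) hp.pos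
  have hindex : H.index = p := by
    have := H.card_mul_index
    rw [hH, Nat.card_eq_fintype_card] at this
    exact Nat.eq_of_mul_eq_mul_left hcard_pos (this.trans (Nat.div_mul_cancel hpn).symm)
  have hminFac : p = (Nat.card G).minFac := by
    have hG1 : Fintype.card G ≠ 1 := fun h1 => hp.ne_one (Nat.dvd_one.mp (h1 ▸ hpn))
    rw [Nat.card_eq_fintype_card]
    exact le_antisymm (hmin _ (Nat.minFac_prime hG1) (Nat.minFac_dvd _))
      (Nat.minFac_le_of_dvd hp.two_le hpn)
  have := H.normal_of_index_eq_minFac_card (hindex.trans hminFac)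
  have hhH : h ∈ H := hgen ▸ Subgroup.mem_zpowers h
  have hord_g : orderOf (QuotientGroup.mk' H g) = p := by
    refine orderOf_eq_prime ?_ (by simpa using hg)
    rw [← hindex, Subgroup.index_eq_card, pow_card_eq_one']
  have hord_h : orderOf h = Fintype.card G / p := by rw [← Nat.card_zpowers, hgen, hH]
  exact oneProdFree_replicate_add_replicate (QuotientGroup.mk' H)
    (by rintro rfl; exact hg hhH) (by simpa using hhH)
    (by rw [hord_g]; exact Nat.sub_one_lt hp.ne_zero)
    (by rw [hord_h]; exact Nat.sub_one_lt hcard_pos.ne')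
end
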